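/- Let n ≥ 1, let L ⊂ ℝⁿ be a convex symmetric body with Minkowski functional ‖x‖_L = min{λ > 0 : x ∈ λL}, let φ : [0,∞) → [0,∞) be an increasing, convex, non-constant function, and let μ be the probability measure with density x ↦ e^{-φ(‖x‖_L)}. Then for every R > 0, limsup_{t→∞} ln(μ((tRL)^c)) / φ(tR) = -1. -/

import Mathlib

/-!
Write `s = tR`. For the upper bound, on the complement of `sL` split
`φ(‖x‖_L) = (1 - θ) φ(‖x‖_L) + θ φ(‖x‖_L)`: the first part is at least `(1 - θ) φ(s)`, and since a
convex, increasing, non-constant `φ` grows at least linearly, `φ(v) ≥ a v + b`, the second leaves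
the integrable factor `e^{-θ a ‖x‖_L}`. Hence `μ((sL)ᶜ) ≤ K_θ e^{-(1 - θ) φ(s)}`.

For the lower bound, the shell `(s + δ)L \ sL` has volume at least `δⁿ |L|` and density at least
`e^{-φ(s + δ)}`. With `δ = e^{-ε φ(s)}` this gives `log μ((sL)ᶜ) ≥ -φ(s + δ) - n ε φ(s) + log |L|`,
and for every increasing `φ → ∞` there are arbitrarily large `s` with
`φ(s + e^{-ε φ(s)}) ≤ (1 + ε) φ(s)`: otherwise the orbit of `s ↦ s + e^{-ε φ(s)}` would stay
bounded while `φ` grows geometrically along it.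
-/

open MeasureTheory Filter Set Pointwise

open Real Topology Module

theorem ConvexOn.exists_pos_mul_add_le {φ : ℝ → ℝ} (hmono : MonotoneOn φ (Ici 0))
    (hconv : ConvexOn ℝ (Ici 0) φ) (hnc : ∃ s t : ℝ, 0 ≤ s ∧ 0 ≤ t ∧ φ s ≠ φ t) :
    ∃ a > 0, ∃ b, ∀ v ≥ 0, a * v + b ≤ φ v := by
  obtain ⟨p, q, hp, hpq, hφpq⟩ : ∃ p q : ℝ, 0 ≤ p ∧ p < q ∧ φ p < φ q := by
    obtain ⟨s, t, hs, ht, hst⟩ := hnc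
    rcases hst.lt_or_gt with h | h
    · exact ⟨s, t, hs, lt_of_not_ge fun hts => h.not_ge (hmono ht hs hts), h⟩
    · exact ⟨t, s, ht, lt_of_not_ge fun hst => h.not_ge (hmono hs ht hst), h⟩
  set a := (φ q - φ p) / (q - p)
  have hq : (0 : ℝ) ≤ q := hp.trans hpq.le
  refine ⟨a, div_pos (sub_pos.2 hφpq) (sub_pos.2 hpq), φ 0 - a * q, fun v hv => ?_⟩
  rcases le_or_gt v q with hvq | hqv
  · have : a * v ≤ a * q := by gcongr
    linarith [hmono self_mem_Ici hv hv]
  · have hslope : a ≤ (φ v - φ q) / (v - q) :=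
      hconv.slope_mono_adjacent hp (hq.trans hqv.le) hpq hqv
    rw [le_div_iff₀ (sub_pos.2 hqv)] at hslope
    linarith [hmono self_mem_Ici hq hq]

theorem tendsto_atTop_of_mul_add_le {φ : ℝ → ℝ} {a b : ℝ} (ha : 0 < a)
    (hlin : ∀ v ≥ 0, a * v + b ≤ φ v) : Tendsto φ atTop atTop :=
  tendsto_atTop_mono' _ ((eventually_ge_atTop 0).mono hlin)
    (tendsto_atTop_add_const_right _ b (tendsto_id.const_mul_atTop ha))

theorem Real.limsup_eq_of_forall_pos {ι : Type*} {f : Filter ι} {u : ι → ℝ} {a : ℝ}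
    (hle : ∀ ε > 0, ∀ᶠ i in f, u i ≤ a + ε) (hge : ∀ ε > 0, ∃ᶠ i in f, a - ε ≤ u i) :
    limsup u f = a := by
  have hbdd : IsBoundedUnder (· ≤ ·) f u := isBoundedUnder_of_eventually_le (hle 1 one_pos)
  have hcobdd : IsCoboundedUnder (· ≤ ·) f u := by
    refine ⟨a - 1, fun c hc => ?_⟩
    obtain ⟨i, hi, hic⟩ := ((hge 1 one_pos).and_eventually hc).exists
    exact hi.trans hic
  refine le_antisymm (le_of_forall_pos_le_add fun ε hε => limsup_le_of_le hcobdd (hle ε hε))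
    (le_of_forall_pos_le_add fun ε hε => ?_)
  linarith [le_limsup_of_frequently_le (hge ε hε) hbdd]

theorem le_add_div_one_sub_of_ratio_le {c d : ℕ → ℝ} {r : ℝ} (hr0 : 0 ≤ r) (hr : r < 1)
    (hd0 : 0 ≤ d 0) (hc : ∀ k, c (k + 1) = c k + d k) (hd : ∀ k, d (k + 1) ≤ r * d k) (k : ℕ) :
    c k ≤ c 0 + d 0 / (1 - r) := by
  have hd_le (k : ℕ) : d k ≤ d 0 * r ^ k := by
    induction k with
    | zero => simp
    | succ k ih => rw [pow_succ]; nlinarith [hd k]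
  have hc_le (k : ℕ) : c k ≤ c 0 + d 0 * ∑ j ∈ Finset.range k, r ^ j := by
    induction k with
    | zero => simp
    | succ k ih => rw [hc, Finset.sum_range_succ]; linarith [hd_le k]
  refine (hc_le k).trans (add_le_add_right ?_ _)
  rw [div_eq_mul_one_div]
  gcongr
  simpa using geom_sum_Ico_le_of_lt_one hr0 hr (m := 0) (n := k)

theorem exists_ge_apply_add_exp_neg_le {φ : ℝ → ℝ} (hmono : MonotoneOn φ (Ici 0)) {ε s₀ : ℝ}
    (hε : 0 < ε) (hs₀ : 0 ≤ s₀) (hφs₀ : 0 < φ s₀) :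
    ∃ s ≥ s₀, φ (s + exp (-(ε * φ s))) ≤ (1 + ε) * φ s := by
  by_contra! hjump
  set c : ℕ → ℝ := fun k => (fun s => s + exp (-(ε * φ s)))^[k] s₀
  set d : ℕ → ℝ := fun k => exp (-(ε * φ (c k)))
  have hc_succ (k : ℕ) : c (k + 1) = c k + d k := Function.iterate_succ_apply' _ k s₀
  have hc_ge (k : ℕ) : s₀ ≤ c k := by
    induction k with
    | zero => rfl
    | succ k ih => rw [hc_succ]; linarith [exp_pos (-(ε * φ (c k)))]
  have hφc (k : ℕ) : φ s₀ ≤ φ (c k) := hmono hs₀ (hs₀.trans (hc_ge k)) (hc_ge k)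
  have hjump' (k : ℕ) : (1 + ε) * φ (c k) < φ (c (k + 1)) := by
    rw [hc_succ]
    exact hjump _ (hc_ge k)
  have hgrowth (k : ℕ) : (1 + ε) ^ k * φ s₀ ≤ φ (c k) := by
    induction k with
    | zero => simp [c]
    | succ k ih =>
      rw [pow_succ', mul_assoc]
      exact (mul_le_mul_of_nonneg_left ih (by linarith)).trans (hjump' k).le
  -- each jump of `φ` shrinks the next step of the orbit by the factor `r`
  set r := exp (-(ε ^ 2 * φ s₀))
  have hd (k : ℕ) : d (k + 1) ≤ r * d k := by
    simp only [d, r, ← exp_add]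
    gcongr
    nlinarith [hjump' k, hφc k]
  have hr : r < 1 := exp_lt_one_iff.2 (by have := mul_pos (pow_pos hε 2) hφs₀; linarith)
  set B := s₀ + d 0 / (1 - r)
  have hcB (k : ℕ) : c k ≤ B :=
    le_add_div_one_sub_of_ratio_le (exp_pos _).le hr (exp_pos _).le hc_succ hd k
  obtain ⟨k, hk⟩ := pow_unbounded_of_one_lt (φ B / φ s₀) (by linarith : 1 < 1 + ε)
  rw [div_lt_iff₀ hφs₀] at hk
  linarith [hgrowth k, hmono (hs₀.trans (hc_ge k)) (hs₀.trans ((hc_ge k).trans (hcB k))) (hcB k)]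

theorem frequently_apply_add_exp_neg_le {φ : ℝ → ℝ} (hmono : MonotoneOn φ (Ici 0))
    (htop : Tendsto φ atTop atTop) {ε : ℝ} (hε : 0 < ε) :
    ∃ᶠ s in atTop, φ (s + exp (-(ε * φ s))) ≤ (1 + ε) * φ s := by
  refine frequently_atTop.2 fun s₀ => ?_
  obtain ⟨s₁, hs₁, hφs₁⟩ : ∃ s₁, max s₀ 0 ≤ s₁ ∧ 0 < φ s₁ :=
    ((eventually_ge_atTop _).and (htop.eventually_gt_atTop 0)).exists
  obtain ⟨s, hs, hφs⟩ :=
    exists_ge_apply_add_exp_neg_le hmono hε ((le_max_right _ _).trans hs₁) hφs₁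
  exact ⟨s, (le_max_left _ _).trans (hs₁.trans hs), hφs⟩

theorem mem_smul_set_iff_gauge_le {E : Type*} [AddCommGroup E] [Module ℝ E] [TopologicalSpace E]
    [IsTopologicalAddGroup E] [ContinuousSMul ℝ E] {L : Set E} (hconv : Convex ℝ L)
    (hclosed : IsClosed L) (h0 : L ∈ 𝓝 0) {a : ℝ} (ha : 0 < a) {x : E} :
    x ∈ a • L ↔ gauge L x ≤ a := by
  have h := gauge_le_one_iff_mem_closure hconv h0 (x := a⁻¹ • x)
  rw [hclosed.closure_eq, gauge_smul_of_nonneg (inv_nonneg.2 ha.le), smul_eq_mul,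
    inv_mul_le_one₀ ha] at h
  rw [mem_smul_set_iff_inv_smul_mem₀ ha.ne', h]

theorem Convex.mem_nhds_zero_of_eq_neg {E : Type*} [AddCommGroup E] [Module ℝ E]
    [TopologicalSpace E] [IsTopologicalAddGroup E] [ContinuousSMul ℝ E] {L : Set E}
    (hconv : Convex ℝ L) (hint : (interior L).Nonempty) (hsymm : L = -L) : L ∈ 𝓝 0 := by
  obtain ⟨x, hx⟩ := hint
  have hx' : -x ∈ L := by
    rw [hsymm, Set.mem_neg, neg_neg]
    exact interior_subset hx
  have h := hconv.combo_interior_self_mem_interior hx hx' one_half_pos one_half_pos.le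
    (add_halves 1)
  rw [smul_neg, add_neg_cancel] at h
  exact mem_interior_iff_mem_nhds.1 h

section AddHaar

variable {E : Type*} [NormedAddCommGroup E] [NormedSpace ℝ E] [FiniteDimensional ℝ E]
  [MeasurableSpace E] [BorelSpace E] (μ : Measure E) [μ.IsAddHaarMeasure]

theorem integrable_exp_neg_mul_norm [Nontrivial E] {c : ℝ} (hc : 0 < c) :
    Integrable (fun x : E => exp (-(c * ‖x‖))) μ := by
  rw [integrable_fun_norm_addHaar μ (f := fun y => exp (-(c * y)))]
  refine (integrableOn_rpow_mul_exp_neg_mul_rpow (s := (finrank ℝ E - 1 : ℕ)) (p := 1)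
    (by linarith [(finrank ℝ E - 1 : ℕ).cast_nonneg (α := ℝ)]) one_pos hc).congr_fun
    (fun y _ => ?_) measurableSet_Ioi
  simp [rpow_natCast]

theorem lintegral_exp_neg_mul_gauge_lt_top [Nontrivial E] {L : Set E}
    (hbdd : Bornology.IsBounded L) (h0 : L ∈ 𝓝 0) {c : ℝ} (hc : 0 < c) :
    ∫⁻ x, ENNReal.ofReal (exp (-(c * gauge L x))) ∂μ < ⊤ := by
  obtain ⟨r, hr, hLr⟩ := hbdd.subset_closedBall_lt 0 0
  refine lt_of_le_of_lt (lintegral_mono fun x => ENNReal.ofReal_le_ofReal ?_)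
    (integrable_exp_neg_mul_norm μ (div_pos hc hr)).lintegral_lt_top
  have := le_gauge_of_subset_closedBall (absorbent_nhds_zero h0) hr.le hLr (x := x)
  refine exp_le_exp.2 (neg_le_neg ?_)
  calc c / r * ‖x‖ = c * (‖x‖ / r) := by ring
    _ ≤ c * gauge L x := by gcongr

end AddHaar

noncomputable def gaugeDensityMeasure {E : Type*} [AddCommGroup E] [Module ℝ E] [MeasurableSpace E]
    (μ : Measure E) (L : Set E) (φ : ℝ → ℝ) : Measure E :=
  μ.withDensity fun x => ENNReal.ofReal (exp (-φ (gauge L x)))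

section Tail

variable {E : Type*} [NormedAddCommGroup E] [NormedSpace ℝ E] [MeasurableSpace E] [BorelSpace E]
  (μ : Measure E) {L : Set E} {φ : ℝ → ℝ}

theorem gaugeDensityMeasure_compl_smul_le (hconv : Convex ℝ L) (hclosed : IsClosed L)
    (h0 : L ∈ 𝓝 0) (hmono : MonotoneOn φ (Ici 0)) {a b : ℝ} (hlin : ∀ v ≥ 0, a * v + b ≤ φ v)
    {θ : ℝ} (hθ0 : 0 ≤ θ) (hθ1 : θ ≤ 1) {s : ℝ} (hs : 0 < s) :
    gaugeDensityMeasure μ L φ (s • L)ᶜ ≤ ENNReal.ofReal (exp (-((1 - θ) * φ s + θ * b))) *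
      ∫⁻ x, ENNReal.ofReal (exp (-(θ * a * gauge L x))) ∂μ := by
  have hpt : ∀ x ∈ (s • L)ᶜ, ENNReal.ofReal (exp (-φ (gauge L x))) ≤
      ENNReal.ofReal (exp (-((1 - θ) * φ s + θ * b))) *
        ENNReal.ofReal (exp (-(θ * a * gauge L x))) := by
    intro x hx
    have hsx : s ≤ gauge L x :=
      (lt_of_not_ge fun h => hx ((mem_smul_set_iff_gauge_le hconv hclosed h0 hs).2 h)).le
    have hφ : φ s ≤ φ (gauge L x) := hmono hs.le (gauge_nonneg x) hsx
    have hlinx := hlin _ (gauge_nonneg (s := L) x)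
    rw [← ENNReal.ofReal_mul (exp_pos _).le, ← exp_add]
    refine ENNReal.ofReal_le_ofReal (exp_le_exp.2 ?_)
    nlinarith
  have hmeas : MeasurableSet (s • L)ᶜ := (hclosed.smul_of_ne_zero hs.ne').measurableSet.compl
  calc gaugeDensityMeasure μ L φ (s • L)ᶜ
      = ∫⁻ x in (s • L)ᶜ, ENNReal.ofReal (exp (-φ (gauge L x))) ∂μ := withDensity_apply _ hmeas
    _ ≤ ∫⁻ x in (s • L)ᶜ, ENNReal.ofReal (exp (-((1 - θ) * φ s + θ * b))) *
          ENNReal.ofReal (exp (-(θ * a * gauge L x))) ∂μ := setLIntegral_mono' hmeas hpt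
    _ ≤ _ := by
        rw [← lintegral_const_mul' _ _ ENNReal.ofReal_ne_top]
        exact setLIntegral_le_lintegral _ _

variable [FiniteDimensional ℝ E] [μ.IsAddHaarMeasure]

theorem ofReal_mul_le_gaugeDensityMeasure_compl_smul [Nontrivial E] (hcomp : IsCompact L)
    (hconv : Convex ℝ L) (h0 : L ∈ 𝓝 0) (hmono : MonotoneOn φ (Ici 0)) {s δ : ℝ} (hs : 0 < s)
    (hδ : 0 < δ) :
    ENNReal.ofReal (exp (-φ (s + δ)) * δ ^ finrank ℝ E) * μ L ≤
      gaugeDensityMeasure μ L φ (s • L)ᶜ := by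
  have hmem {t : ℝ} (ht : 0 < t) (x : E) :=
    mem_smul_set_iff_gauge_le hconv hcomp.isClosed h0 ht (x := x)
  set A := ((s + δ) • L) \ (s • L)
  have hsub : s • L ⊆ (s + δ) • L := fun x hx =>
    (hmem (by linarith) x).2 (((hmem hs x).1 hx).trans (by linarith))
  have hmeas (t : ℝ) : MeasurableSet (t • L) := (hcomp.smul t).isClosed.measurableSet
  have hvol : ENNReal.ofReal (δ ^ finrank ℝ E) * μ L ≤ μ A := by
    rw [measure_sdiff hsub (hmeas s).nullMeasurableSet (hcomp.smul s).measure_lt_top.ne,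
      Measure.addHaar_smul_of_nonneg μ (by linarith), Measure.addHaar_smul_of_nonneg μ hs.le,
      ← ENNReal.sub_mul fun _ _ => hcomp.measure_lt_top.ne,
      ← ENNReal.ofReal_sub _ (by positivity)]
    gcongr
    linarith [pow_add_pow_le hs.le hδ.le (finrank_pos (R := ℝ) (M := E)).ne']
  have hpt : ∀ x ∈ A,
      ENNReal.ofReal (exp (-φ (s + δ))) ≤ ENNReal.ofReal (exp (-φ (gauge L x))) := by
    intro x hx
    have := hmono (gauge_nonneg x) (show (0 : ℝ) ≤ s + δ by linarith)
      ((hmem (by linarith) x).1 hx.1)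
    exact ENNReal.ofReal_le_ofReal (exp_le_exp.2 (by linarith))
  calc ENNReal.ofReal (exp (-φ (s + δ)) * δ ^ finrank ℝ E) * μ L
      ≤ ENNReal.ofReal (exp (-φ (s + δ))) * μ A := by
        rw [ENNReal.ofReal_mul (exp_pos _).le, mul_assoc]
        gcongr
    _ = ∫⁻ _ in A, ENNReal.ofReal (exp (-φ (s + δ))) ∂μ := (setLIntegral_const _ _).symm
    _ ≤ ∫⁻ x in A, ENNReal.ofReal (exp (-φ (gauge L x))) ∂μ :=
        setLIntegral_mono' ((hmeas _).diff (hmeas _)) hpt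
    _ ≤ ∫⁻ x in (s • L)ᶜ, ENNReal.ofReal (exp (-φ (gauge L x))) ∂μ :=
        lintegral_mono_set fun x hx => hx.2
    _ = gaugeDensityMeasure μ L φ (s • L)ᶜ := (withDensity_apply _ (hmeas s).compl).symm

end Tail

section LogAsymptotics

variable {E : Type*} [NormedAddCommGroup E] [NormedSpace ℝ E] [FiniteDimensional ℝ E]
  [Nontrivial E] [MeasurableSpace E] [BorelSpace E] (μ : Measure E) [μ.IsAddHaarMeasure]
  {L : Set E} {φ : ℝ → ℝ} {a b : ℝ}

theorem gaugeDensityMeasure_compl_smul_lt_top (hcomp : IsCompact L) (hconv : Convex ℝ L)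
    (h0 : L ∈ 𝓝 0) (hmono : MonotoneOn φ (Ici 0)) (ha : 0 < a)
    (hlin : ∀ v ≥ 0, a * v + b ≤ φ v) {s : ℝ} (hs : 0 < s) :
    gaugeDensityMeasure μ L φ (s • L)ᶜ < ⊤ :=
  (gaugeDensityMeasure_compl_smul_le μ hconv hcomp.isClosed h0 hmono hlin zero_le_one le_rfl
    hs).trans_lt (ENNReal.mul_lt_top ENNReal.ofReal_lt_top
      (lintegral_exp_neg_mul_gauge_lt_top μ hcomp.isBounded h0 (by simpa using ha)))

theorem toReal_gaugeDensityMeasure_compl_smul_pos (hcomp : IsCompact L) (hconv : Convex ℝ L)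
    (h0 : L ∈ 𝓝 0) (hmono : MonotoneOn φ (Ici 0)) (ha : 0 < a)
    (hlin : ∀ v ≥ 0, a * v + b ≤ φ v) {s : ℝ} (hs : 0 < s) :
    0 < (gaugeDensityMeasure μ L φ (s • L)ᶜ).toReal := by
  refine ENNReal.toReal_pos (lt_of_lt_of_le ?_
    (ofReal_mul_le_gaugeDensityMeasure_compl_smul μ hcomp hconv h0 hmono hs one_pos)).ne'
    (gaugeDensityMeasure_compl_smul_lt_top μ hcomp hconv h0 hmono ha hlin hs).ne
  exact ENNReal.mul_pos (ENNReal.ofReal_pos.2 (by positivity)).ne'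
    (Measure.measure_pos_of_mem_nhds μ h0).ne'

theorem eventually_log_gaugeDensityMeasure_compl_smul_div_le (hcomp : IsCompact L)
    (hconv : Convex ℝ L) (h0 : L ∈ 𝓝 0) (hmono : MonotoneOn φ (Ici 0)) (ha : 0 < a)
    (hlin : ∀ v ≥ 0, a * v + b ≤ φ v) {ε : ℝ} (hε : 0 < ε) :
    ∀ᶠ s in atTop, log (gaugeDensityMeasure μ L φ (s • L)ᶜ).toReal / φ s ≤ -1 + ε := by
  set θ := min 1 (ε / 2)
  have hθ : 0 < θ := lt_min one_pos (half_pos hε)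
  set I := (∫⁻ x, ENNReal.ofReal (exp (-(θ * a * gauge L x))) ∂μ).toReal
  set C := log I - θ * b
  have htop := tendsto_atTop_of_mul_add_le ha hlin
  filter_upwards [eventually_gt_atTop 0, htop.eventually_gt_atTop 0,
    htop.eventually_ge_atTop (C / (ε / 2))] with s hs hφs hCs
  have hpos := toReal_gaugeDensityMeasure_compl_smul_pos μ hcomp hconv h0 hmono ha hlin hs
  have hle : (gaugeDensityMeasure μ L φ (s • L)ᶜ).toReal ≤
      exp (-((1 - θ) * φ s + θ * b)) * I := by
    have h := gaugeDensityMeasure_compl_smul_le μ hconv hcomp.isClosed h0 hmono hlin hθ.le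
      (min_le_left _ _) hs
    rw [← ENNReal.toReal_le_toReal (gaugeDensityMeasure_compl_smul_lt_top μ hcomp hconv h0
      hmono ha hlin hs).ne (ENNReal.mul_ne_top ENNReal.ofReal_ne_top
      (lintegral_exp_neg_mul_gauge_lt_top μ hcomp.isBounded h0 (mul_pos hθ ha)).ne)] at h
    rwa [ENNReal.toReal_mul, ENNReal.toReal_ofReal (exp_pos _).le] at h
  have hI : 0 < I := pos_of_mul_pos_right (hpos.trans_le hle) (exp_pos _).le
  have hlog : log (gaugeDensityMeasure μ L φ (s • L)ᶜ).toReal ≤ -((1 - θ) * φ s) + C := by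
    have h := log_le_log hpos hle
    rw [log_mul (exp_pos _).ne' hI.ne', log_exp] at h
    linarith
  rw [div_le_iff₀' (half_pos hε)] at hCs
  rw [div_le_iff₀ hφs]
  nlinarith [min_le_right 1 (ε / 2)]

theorem frequently_le_log_gaugeDensityMeasure_compl_smul_div (hcomp : IsCompact L)
    (hconv : Convex ℝ L) (h0 : L ∈ 𝓝 0) (hmono : MonotoneOn φ (Ici 0)) (ha : 0 < a)
    (hlin : ∀ v ≥ 0, a * v + b ≤ φ v) {ε : ℝ} (hε : 0 < ε) :
    ∃ᶠ s in atTop, -1 - ε ≤ log (gaugeDensityMeasure μ L φ (s • L)ᶜ).toReal / φ s := by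
  set d := finrank ℝ E
  set ε' := ε / (2 * (d + 1))
  have hε' : 0 < ε' := by positivity
  have hε'd : (d + 1) * ε' = ε / 2 := by simp only [ε']; field_simp
  set V := μ.real L
  have hV : 0 < V :=
    ENNReal.toReal_pos (Measure.measure_pos_of_mem_nhds μ h0).ne' hcomp.measure_lt_top.ne
  have htop := tendsto_atTop_of_mul_add_le ha hlin
  refine ((frequently_apply_add_exp_neg_le hmono htop hε').and_eventually
    ((eventually_gt_atTop 0).and ((htop.eventually_gt_atTop 0).and
      (htop.eventually_ge_atTop (-log V / (ε / 2)))))).mono ?_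
  rintro s ⟨hjump, hs, hφs, hVs⟩
  set δ := exp (-(ε' * φ s))
  have hle : exp (-φ (s + δ)) * δ ^ d * V ≤ (gaugeDensityMeasure μ L φ (s • L)ᶜ).toReal := by
    have h := ofReal_mul_le_gaugeDensityMeasure_compl_smul μ hcomp hconv h0 hmono hs
      (exp_pos (-(ε' * φ s)))
    rwa [← ENNReal.toReal_le_toReal
      (ENNReal.mul_ne_top ENNReal.ofReal_ne_top hcomp.measure_lt_top.ne)
      (gaugeDensityMeasure_compl_smul_lt_top μ hcomp hconv h0 hmono ha hlin hs).ne,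
      ENNReal.toReal_mul, ENNReal.toReal_ofReal (by positivity)] at h
  have hlog : -φ (s + δ) - d * (ε' * φ s) + log V ≤
      log (gaugeDensityMeasure μ L φ (s • L)ᶜ).toReal := by
    have h := log_le_log (by positivity) hle
    rw [log_mul (by positivity) hV.ne', log_mul (exp_pos _).ne' (pow_pos (exp_pos _) _).ne',
      log_exp, log_pow, log_exp] at h
    linarith
  rw [div_le_iff₀' (half_pos hε)] at hVs
  rw [le_div_iff₀ hφs]
  linarith [congrArg (· * φ s) hε'd]

end LogAsymptotics

theorem limsup_log_gaugeDensityMeasure_compl_smul_div {E : Type*} [NormedAddCommGroup E]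
    [NormedSpace ℝ E] [FiniteDimensional ℝ E] [Nontrivial E] [MeasurableSpace E] [BorelSpace E]
    (μ : Measure E) [μ.IsAddHaarMeasure] {L : Set E} {φ : ℝ → ℝ} {a b : ℝ}
    (hcomp : IsCompact L) (hconv : Convex ℝ L) (h0 : L ∈ 𝓝 0) (hmono : MonotoneOn φ (Ici 0))
    (ha : 0 < a) (hlin : ∀ v ≥ 0, a * v + b ≤ φ v) :
    limsup (fun s => log (gaugeDensityMeasure μ L φ (s • L)ᶜ).toReal / φ s) atTop = -1 :=
  Real.limsup_eq_of_forall_pos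
    (fun _ hε => eventually_log_gaugeDensityMeasure_compl_smul_div_le μ hcomp hconv h0 hmono
      ha hlin hε)
    (fun _ hε => frequently_le_log_gaugeDensityMeasure_compl_smul_div μ hcomp hconv h0 hmono
      ha hlin hε)

theorem stmt13_general (n : ℕ) (hn : 1 ≤ n)
    (L : Set (EuclideanSpace ℝ (Fin n)))
    (hLcomp : IsCompact L) (hLconv : Convex ℝ L)
    (hLint : (interior L).Nonempty) (hLsymm : L = -L)
    (φ : ℝ → ℝ)
    (hmono : MonotoneOn φ (Set.Ici 0))
    (hconv : ConvexOn ℝ (Set.Ici 0) φ)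
    (hnc : ∃ s t : ℝ, 0 ≤ s ∧ 0 ≤ t ∧ φ s ≠ φ t)
    (μ : Measure (EuclideanSpace ℝ (Fin n)))
    (hμ : μ = volume.withDensity fun x => ENNReal.ofReal (Real.exp (-φ (gauge L x))))
    (R : ℝ) (hR : 0 < R) :
    Filter.limsup
      (fun t => Real.log (μ ((t * R) • L)ᶜ).toReal / φ (t * R))
      Filter.atTop = -1 := by
  have : Nonempty (Fin n) := ⟨⟨0, hn⟩⟩
  obtain ⟨a, ha, b, hlin⟩ := hconv.exists_pos_mul_add_le hmono hnc
  have hlimsup := limsup_log_gaugeDensityMeasure_compl_smul_div volume hLcomp hLconv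
    (hLconv.mem_nhds_zero_of_eq_neg hLint hLsymm) hmono ha hlin
  have hmap : map (fun t => t * R) atTop = atTop := by
    simpa only [div_inv_eq_mul] using map_div_atTop_eq R⁻¹ (inv_pos.2 hR)
  rw [← hmap, ← limsup_comp] at hlimsup
  rw [hμ]
  exact hlimsup

theorem stmt13 (n : ℕ) (hn : 1 ≤ n)
    (L : Set (EuclideanSpace ℝ (Fin n)))
    (hLcomp : IsCompact L) (hLconv : Convex ℝ L)
    (hLint : (interior L).Nonempty) (hLsymm : L = -L)
    (φ : ℝ → ℝ)
    (hmono : MonotoneOn φ (Set.Ici 0))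
    (hconv : ConvexOn ℝ (Set.Ici 0) φ)
    (hnonneg : ∀ t ∈ Set.Ici (0 : ℝ), 0 ≤ φ t)
    (hnc : ∃ s t : ℝ, 0 ≤ s ∧ 0 ≤ t ∧ φ s ≠ φ t)
    (μ : Measure (EuclideanSpace ℝ (Fin n)))
    (hμ : μ = volume.withDensity fun x => ENNReal.ofReal (Real.exp (-φ (gauge L x))))
    (hprob : IsProbabilityMeasure μ)
    (R : ℝ) (hR : 0 < R) :
    Filter.limsup
      (fun t => Real.log (μ ((t * R) • L)ᶜ).toReal / φ (t * R))
      Filter.atTop = -1 :=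
  stmt13_general n hn L hLcomp hLconv hLint hLsymm φ hmono hconv hnc μ hμ R hR
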